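/- arXiv:2506.01058 — 2 statements merged into one kernel-verified Lean document; each statement's English description precedes it below -/
import Mathlib

section
/- Let V be a nonzero finite-dimensional real vector space, B a nondegenerate symmetric bilinear form on V, c a positive real number, and A : V → V a linear map that is skew-adjoint with respect to B and satisfies A ∘ A = c · id_V. Then both √c and -√c are eigenvalues of A. -/
/-!
If `A² = a² • id` then `(A - a)(A + a) = 0`, so any vector moved off the line `-a • x` by `A`
yields an eigenvector `A x + a • x` for `a`; this fails only when `A = -a • id`. A nonzero
multiple of the identity cannot be skew-adjoint for a nondegenerate form on a nonzero space,
since skewness would give `2μ B x y = 0` for all `x, y`. Applied with `a = ±√c`.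
-/

theorem ne_smul_id_of_skewAdjoint {K V : Type*} [Field K] [NeZero (2 : K)] [AddCommGroup V]
    [Module K V] [Nontrivial V] (B : V →ₗ[K] V →ₗ[K] K)
    (hnd : ∀ x : V, (∀ y : V, B x y = 0) → x = 0) {A : V →ₗ[K] V}
    (hskew : ∀ x y : V, B (A x) y = -B x (A y)) {μ : K} (hμ : μ ≠ 0) :
    A ≠ μ • LinearMap.id := by
  rintro rfl
  obtain ⟨x, hx⟩ := exists_ne (0 : V)
  refine hx (hnd x fun y => ?_)
  have h := hskew x y
  simp only [LinearMap.smul_apply, LinearMap.id_apply, map_smul, smul_eq_mul] at h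
  have h2 : (2 * μ) * B x y = 0 := by linear_combination h
  exact (mul_eq_zero.mp h2).resolve_left (mul_ne_zero two_ne_zero hμ)

theorem Module.End.hasEigenvalue_of_comp_self_eq_smul_id {R M : Type*} [CommRing R]
    [AddCommGroup M] [Module R M] {A : Module.End R M} {a : R}
    (hsq : A ∘ₗ A = (a * a) • LinearMap.id) (hne : A ≠ (-a) • LinearMap.id) :
    A.HasEigenvalue a := by
  obtain ⟨x, hx⟩ : ∃ x, A x ≠ (-a) • x := by
    by_contra! h
    exact hne (LinearMap.ext h)
  have hA2 : A (A x) = (a * a) • x := by simpa using LinearMap.congr_fun hsq x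
  refine hasEigenvalue_of_hasEigenvector (x := A x + a • x) ⟨?_, ?_⟩
  · rw [mem_eigenspace_iff, map_add, map_smul, hA2, smul_add, smul_smul]
    abel
  · rwa [Ne, add_eq_zero_iff_eq_neg, ← neg_smul]

theorem eigenvalues_pm_sqrt_of_sq_eq_smul_id_general (V : Type*) [AddCommGroup V]
    [Module ℝ V] [Nontrivial V]
    (B : V →ₗ[ℝ] V →ₗ[ℝ] ℝ)
    (hnd : ∀ x : V, (∀ y : V, B x y = 0) → x = 0)
    (c : ℝ) (hc : 0 < c) (A : V →ₗ[ℝ] V)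
    (hskew : ∀ x y : V, B (A x) y = -B x (A y))
    (hsq : A ∘ₗ A = c • LinearMap.id) :
    Module.End.HasEigenvalue A (Real.sqrt c) ∧
      Module.End.HasEigenvalue A (-Real.sqrt c) := by
  have hs : Real.sqrt c ≠ 0 := (Real.sqrt_pos.mpr hc).ne'
  have hsq' : A ∘ₗ A = (Real.sqrt c * Real.sqrt c) • LinearMap.id := by
    rwa [Real.mul_self_sqrt hc.le]
  constructor
  · exact Module.End.hasEigenvalue_of_comp_self_eq_smul_id hsq'
      (ne_smul_id_of_skewAdjoint B hnd hskew (neg_ne_zero.mpr hs))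
  · refine Module.End.hasEigenvalue_of_comp_self_eq_smul_id (by rwa [neg_mul_neg]) ?_
    rw [neg_neg]
    exact ne_smul_id_of_skewAdjoint B hnd hskew hs

/-- If `A` is skew-adjoint with respect to a nondegenerate symmetric bilinear
form `B` on a nonzero finite-dimensional real vector space and `A ∘ A = c • id`
with `c > 0`, then both `√c` and `-√c` are eigenvalues of `A`. -/
theorem eigenvalues_pm_sqrt_of_sq_eq_smul_id (V : Type*) [AddCommGroup V]
    [Module ℝ V] [FiniteDimensional ℝ V] [Nontrivial V]
    (B : V →ₗ[ℝ] V →ₗ[ℝ] ℝ)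
    (hsymm : ∀ x y : V, B x y = B y x)
    (hnd : ∀ x : V, (∀ y : V, B x y = 0) → x = 0)
    (c : ℝ) (hc : 0 < c) (A : V →ₗ[ℝ] V)
    (hskew : ∀ x y : V, B (A x) y = -B x (A y))
    (hsq : A ∘ₗ A = c • LinearMap.id) :
    Module.End.HasEigenvalue A (Real.sqrt c) ∧
      Module.End.HasEigenvalue A (-Real.sqrt c) :=
  eigenvalues_pm_sqrt_of_sq_eq_smul_id_general V B hnd c hc A hskew hsq
end

section
/- Let V be a finite-dimensional real vector space, B a nondegenerate symmetric bilinear form on V, c a positive real number, and A : V → V a linear map that is skew-adjoint with respect to B and satisfies B(Ax, Ay) = c · B(x, y) for all x, y ∈ V. Then every eigenvalue λ ∈ ℂ of the complexification of A is purely imaginary (has real part zero). In particular, for a pseudo-H-type Lie algebra and a central element Z with ⟨Z, Z⟩ > 0, all eigenvalues of j(Z) are purely imaginary. -/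
/-!
Skew-adjointness turns `B (A x) (A y) = c * B x y` into `B (A (A x)) y = -c * B x y`, so by
nondegeneracy `A² = -c`. The complexified operator then also squares to the scalar `-c`, every
eigenvalue `μ` satisfies `μ² = -c < 0`, and hence `μ = ±i√c`.
-/

theorem LinearMap.BilinForm.sq_eq_algebraMap_neg_of_skew_of_conformal {R M : Type*} [CommRing R]
    [AddCommGroup M] [Module R M] {B : LinearMap.BilinForm R M} (hB : B.SeparatingLeft)
    {A : Module.End R M} {c : R} (hskew : ∀ x y, B (A x) y = -B x (A y))
    (hAc : ∀ x y, B (A x) (A y) = c * B x y) :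
    A ^ 2 = algebraMap R (Module.End R M) (-c) := by
  ext x
  have hA2 : ∀ y, B (A (A x)) y = -c * B x y := fun y => by rw [hskew, hAc, neg_mul]
  refine sub_eq_zero.mp (hB _ fun y => ?_)
  simp [sq, hA2]

theorem spectrum.sq_eq_of_sq_eq_algebraMap {𝕜 A : Type*} [Field 𝕜] [Ring A] [Algebra 𝕜 A]
    {a : A} {r : 𝕜} (ha : a ^ 2 = algebraMap 𝕜 A r) {μ : 𝕜} (hμ : μ ∈ spectrum 𝕜 a) :
    μ ^ 2 = r := by
  have : Nontrivial A := by
    by_contra h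
    rw [not_nontrivial_iff_subsingleton] at h
    simp [spectrum.of_subsingleton] at hμ
  simpa [ha, spectrum.scalar_eq] using spectrum.pow_mem_pow a 2 hμ

theorem Complex.re_eq_zero_of_sq_eq_neg_ofReal {c : ℝ} (hc : 0 ≤ c) {z : ℂ} (hz : z ^ 2 = -c) :
    z.re = 0 := by
  have : z ^ 2 = (Real.sqrt c * I) ^ 2 := by
    rw [hz, mul_pow, I_sq, ← ofReal_pow, Real.sq_sqrt hc]
    ring
  rcases sq_eq_sq_iff_eq_or_eq_neg.mp this with rfl | rfl <;> simp

theorem Module.End.baseChange_algebraMap (R S M : Type*) [CommRing R] [CommRing S] [Algebra R S]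
    [AddCommGroup M] [Module R M] (r : R) :
    (algebraMap R (Module.End R M) r).baseChange S
      = algebraMap S _ (algebraMap R S r) := by
  rw [← IsScalarTower.algebraMap_apply]
  exact (Module.End.baseChangeHom R S M).commutes r

theorem spectrum_purely_imaginary_of_pseudoH_pos_general (V : Type*) [AddCommGroup V]
    [Module ℝ V]
    (B : V →ₗ[ℝ] V →ₗ[ℝ] ℝ)
    (hnd : ∀ x : V, (∀ y : V, B x y = 0) → x = 0)
    (c : ℝ) (hc : 0 < c) (A : V →ₗ[ℝ] V)
    (hskew : ∀ x y : V, B (A x) y = -B x (A y))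
    (hAc : ∀ x y : V, B (A x) (A y) = c * B x y) :
    ∀ μ ∈ spectrum ℂ (A.baseChange ℂ), μ.re = 0 := by
  intro μ hμ
  have hA := LinearMap.BilinForm.sq_eq_algebraMap_neg_of_skew_of_conformal hnd hskew hAc
  have hAℂ : A.baseChange ℂ ^ 2 = algebraMap ℂ _ ((-c : ℝ) : ℂ) := by
    rw [← LinearMap.baseChange_pow, hA, Module.End.baseChange_algebraMap, Complex.coe_algebraMap]
  exact Complex.re_eq_zero_of_sq_eq_neg_ofReal hc.le
    (by simpa using spectrum.sq_eq_of_sq_eq_algebraMap hAℂ hμ)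

/-- If `A` is skew-adjoint with respect to a nondegenerate symmetric bilinear
form `B` on a finite-dimensional real vector space and satisfies
`B (A x) (A y) = c * B x y` with `c > 0` (as the `j`-mapping `j(Z)` of a
pseudo-`H`-type Lie algebra at a central element with `⟨Z, Z⟩ = c > 0` does),
then every eigenvalue of the complexification of `A` is purely imaginary. -/
theorem spectrum_purely_imaginary_of_pseudoH_pos (V : Type*) [AddCommGroup V]
    [Module ℝ V] [FiniteDimensional ℝ V]
    (B : V →ₗ[ℝ] V →ₗ[ℝ] ℝ)
    (hsymm : ∀ x y : V, B x y = B y x)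
    (hnd : ∀ x : V, (∀ y : V, B x y = 0) → x = 0)
    (c : ℝ) (hc : 0 < c) (A : V →ₗ[ℝ] V)
    (hskew : ∀ x y : V, B (A x) y = -B x (A y))
    (hAc : ∀ x y : V, B (A x) (A y) = c * B x y) :
    ∀ μ ∈ spectrum ℂ (A.baseChange ℂ), μ.re = 0 :=
  spectrum_purely_imaginary_of_pseudoH_pos_general V B hnd c hc A hskew hAc
end
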